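/- arXiv:1510.08782 — 4 statements merged into one kernel-verified Lean document; each statement's English description precedes it below -/
import Mathlib

section
/- Let A be a finite-dimensional algebra over an algebraically closed field F of characteristic 0 and suppose A is PI-equivalent to a direct product B_1 × … × B_l of basic algebras. Then exp(A) = max_{1≤i≤l} exp(B_i), and t(A) = max{ t(B_j) : exp(B_j) = exp(A) }. -/
noncomputable section

namespace PIDim

variable (F : Type) [Field F]

/-- The span `P_n` of the multilinear monomials `x_{σ(1)} ⋯ x_{σ(n)}`. -/
def Pn (n : ℕ) : Submodule F (FreeAlgebra F ℕ) :=
  Submodule.span F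
    {w | ∃ σ : Equiv.Perm (Fin n),
      w = (List.ofFn fun i : Fin n => FreeAlgebra.ι F ((σ i : Fin n) : ℕ)).prod}

/-- The T-ideal (here recorded as an `F`-subspace) of polynomial identities of `W`. -/
def IdSet (W : Type) [Ring W] [Algebra F W] : Submodule F (FreeAlgebra F ℕ) where
  carrier := {f | ∀ φ : FreeAlgebra F ℕ →ₐ[F] W, φ f = 0}
  add_mem' := by
    intro a b ha hb φ
    simp [map_add, ha φ, hb φ]
  zero_mem' := by intro φ; simp
  smul_mem' := by
    intro c f hf φ
    simp [map_smul, hf φ]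

/-- The `n`-th codimension `c_n(W) = dim_F P_n/(P_n ∩ Id(W))`. -/
def codim (W : Type) [Ring W] [Algebra F W] (n : ℕ) : ℕ :=
  Module.finrank F (↥(Pn F n) ⧸ Submodule.comap (Pn F n).subtype (IdSet F W))

/-- Two algebras are PI-equivalent when they satisfy the same polynomial identities. -/
def PIequiv (W₁ : Type) [Ring W₁] [Algebra F W₁] (W₂ : Type) [Ring W₂] [Algebra F W₂] : Prop :=
  IdSet F W₁ = IdSet F W₂

/-- The Jacobson radical of `A`, as an `F`-subspace of `A`. -/
def jacRad (A : Type) [Ring A] [Algebra F A] : Submodule F A :=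
  Submodule.restrictScalars F ((⊥ : Ideal A).jacobson)

/-- The nilpotency degree of the Jacobson radical of `A`:
the least `n` with `J(A) ^ n = 0`. -/
def nildeg (A : Type) [Ring A] [Algebra F A] : ℕ :=
  sInf {n : ℕ | jacRad F A ^ n = ⊥}

/-- `Par(A) = (dim_F A_ss, nildeg J(A) - 1)`; here `dim_F A_ss = dim_F A - dim_F J(A)`. -/
def ParP (A : Type) [Ring A] [Algebra F A] : ℕ × ℕ :=
  (Module.finrank F A - Module.finrank F (jacRad F A), nildeg F A - 1)

/-- A bundled finite-dimensional `F`-algebra. -/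
structure FDAlg where
  carrier : Type
  [ring : Ring carrier]
  [alg : Algebra F carrier]
  [fd : FiniteDimensional F carrier]

attribute [instance] FDAlg.ring FDAlg.alg FDAlg.fd

/-- `A` is basic if it is not PI-equivalent to a finite direct product of
finite-dimensional algebras each of whose parameter is lexicographically smaller. -/
def IsBasic (A : Type) [Ring A] [Algebra F A] : Prop :=
  ¬ ∃ (l : ℕ) (B : Fin l → FDAlg F),
      (∀ i, toLex (ParP F (B i).carrier) < toLex (ParP F A)) ∧
      PIequiv F A (∀ i, (B i).carrier)

/-- `e` is the PI-exponent of `W`: the limit of `c_n(W) ^ (1/n)`. -/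
def HasExponent (W : Type) [Ring W] [Algebra F W] (e : ℝ) : Prop :=
  Filter.Tendsto (fun n : ℕ => (codim F W n : ℝ) ^ ((n : ℝ)⁻¹)) Filter.atTop (nhds e)

/-- `t` is the polynomial part of the codimension sequence of `W` (relative to the
exponential part `e`): `c₁ n^t e^n ≤ c_n(W) ≤ c₂ n^t e^n` for large `n`. -/
def HasPolyPart (W : Type) [Ring W] [Algebra F W] (e t : ℝ) : Prop :=
  ∃ c₁ c₂ : ℝ, 0 < c₁ ∧ 0 < c₂ ∧ ∃ N : ℕ, ∀ n ≥ N,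
    c₁ * (n : ℝ) ^ t * e ^ n ≤ (codim F W n : ℝ) ∧
    (codim F W n : ℝ) ≤ c₂ * (n : ℝ) ^ t * e ^ n

/-- Renaming of variables, as an algebra endomorphism of the free algebra. -/
def rename (g : ℕ → ℕ) : FreeAlgebra F ℕ →ₐ[F] FreeAlgebra F ℕ :=
  FreeAlgebra.lift F fun i => FreeAlgebra.ι F (g i)

/-- `p` alternates in the set `S` of variables: every transposition of two variables
of `S` changes `p` to `-p`. -/
def AlternatesOn (S : Finset ℕ) (p : FreeAlgebra F ℕ) : Prop :=
  ∀ a ∈ S, ∀ b ∈ S, a ≠ b → rename F (Equiv.swap a b : ℕ → ℕ) p = -p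

/-- There exists a multilinear non-identity of `A` alternating in `ν` disjoint sets of
size `r` and in `μ` further disjoint sets of size `r + 1`. -/
def ExAltNonId (A : Type) [Ring A] [Algebra F A] (ν r μ : ℕ) : Prop :=
  ∃ (n : ℕ) (p : FreeAlgebra F ℕ) (T : Fin ν → Finset ℕ) (U : Fin μ → Finset ℕ),
    p ∈ Pn F n ∧ p ∉ IdSet F A ∧
    (∀ j, (T j).card = r) ∧ (∀ j, (U j).card = r + 1) ∧
    (∀ j k, j ≠ k → Disjoint (T j) (T k)) ∧
    (∀ j k, j ≠ k → Disjoint (U j) (U k)) ∧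
    (∀ j k, Disjoint (T j) (U k)) ∧
    (∀ j, AlternatesOn F (T j) p) ∧ (∀ j, AlternatesOn F (U j) p)

/-- `max Δ_ν`. -/
def maxDelta (A : Type) [Ring A] [Algebra F A] (ν : ℕ) : ℕ :=
  sSup {r : ℕ | ExAltNonId F A ν r 0}

/-- The first entry `d` of the Kemer index: the stable value of `max Δ_ν`. -/
def kemerD (A : Type) [Ring A] [Algebra F A] : ℕ :=
  ⨅ ν : ℕ, maxDelta F A ν

/-- `max S_ν^d`. -/
def maxSnu (A : Type) [Ring A] [Algebra F A] (ν : ℕ) : ℕ :=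
  sSup {j : ℕ | ExAltNonId F A ν (kemerD F A) j}

/-- The second entry `s` of the Kemer index: the stable value of `max S_ν^d`. -/
def kemerS (A : Type) [Ring A] [Algebra F A] : ℕ :=
  ⨅ ν : ℕ, maxSnu F A ν

/-- The Kemer index `κ_A = (d, s)`. -/
def kemerIdx (A : Type) [Ring A] [Algebra F A] : ℕ × ℕ :=
  (kemerD F A, kemerS F A)

/-! Identities of a direct product are the common identities of its factors, hence
`c_n(B_i) ≤ c_n(A) ≤ ∑_i c_n(B_i) ≤ l · max_i c_n(B_i)`. Taking `n`-th roots and using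
`l^{1/n} → 1` squeezes `c_n(A)^{1/n}` to `max_i exp(B_i)`. For the polynomial part, compare
everything with `n^T e^n`, `e = exp(A)`: a factor with `exp(B_i) < e` is `o(n^T e^n)` for every
`T`, so only the factors of maximal exponent matter, and `n^s e^n = O(n^t e^n)` forces `s ≤ t`. -/

section Asymptotics

open Filter Asymptotics Topology

theorem isLittleO_rpow_mul_pow_of_lt {e' e : ℝ} (he' : 0 ≤ e') (hlt : e' < e) (s t : ℝ) :
    (fun n : ℕ => (n : ℝ) ^ s * e' ^ n) =o[atTop] fun n => (n : ℝ) ^ t * e ^ n := by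
  obtain ⟨k, hk⟩ := exists_nat_ge (s - t)
  have hpoly : (fun n : ℕ => (n : ℝ) ^ s) =O[atTop] fun n => (n : ℝ) ^ t * (n : ℝ) ^ k := by
    refine IsBigO.of_bound' ?_
    filter_upwards [eventually_ge_atTop 1] with n hn
    have hn : (1 : ℝ) ≤ n := by exact_mod_cast hn
    rw [← Real.rpow_natCast, ← Real.rpow_add (by linarith), Real.norm_of_nonneg (by positivity),
      Real.norm_of_nonneg (by positivity)]
    exact Real.rpow_le_rpow_of_exponent_le hn (by linarith)
  have hgeom : (fun n : ℕ => (n : ℝ) ^ k * e' ^ n) =o[atTop] fun n => e ^ n :=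
    isLittleO_pow_const_mul_const_pow_const_pow_of_norm_lt k
      (by rwa [Real.norm_of_nonneg he'])
  refine (hpoly.mul (isBigO_refl _ _)).trans_isLittleO ?_
  simpa only [mul_assoc] using (isBigO_refl (fun n : ℕ => (n : ℝ) ^ t) _).mul_isLittleO hgeom

theorem isBigO_rpow_mul_pow_of_le {e' e s t : ℝ} (he' : 0 ≤ e') (hle : e' ≤ e)
    (hst : e' = e → s ≤ t) :
    (fun n : ℕ => (n : ℝ) ^ s * e' ^ n) =O[atTop] fun n => (n : ℝ) ^ t * e ^ n := by
  rcases hle.lt_or_eq with hlt | rfl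
  · exact (isLittleO_rpow_mul_pow_of_lt he' hlt s t).isBigO
  refine (IsBigO.of_bound' ?_).mul (isBigO_refl _ _)
  filter_upwards [eventually_ge_atTop 1] with n hn
  have hn : (1 : ℝ) ≤ n := by exact_mod_cast hn
  rw [Real.norm_of_nonneg (by positivity), Real.norm_of_nonneg (by positivity)]
  exact Real.rpow_le_rpow_of_exponent_le hn (hst rfl)

theorem le_of_isBigO_rpow_mul_pow {e s t : ℝ} (he : 0 < e)
    (h : (fun n : ℕ => (n : ℝ) ^ s * e ^ n) =O[atTop] fun n => (n : ℝ) ^ t * e ^ n) :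
    s ≤ t := by
  by_contra! hts
  obtain ⟨c, hc⟩ := h.bound
  have hgrow : Tendsto (fun n : ℕ => (n : ℝ) ^ (s - t)) atTop atTop :=
    (tendsto_rpow_atTop (sub_pos.2 hts)).comp tendsto_natCast_atTop_atTop
  obtain ⟨n, hbound, hbig, hn⟩ :=
    (hc.and ((hgrow.eventually_gt_atTop c).and (eventually_gt_atTop 0))).exists
  have hn : (0 : ℝ) < n := by exact_mod_cast hn
  have hsplit : (n : ℝ) ^ s = (n : ℝ) ^ (s - t) * (n : ℝ) ^ t := by
    rw [← Real.rpow_add hn, sub_add_cancel]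
  have hpos : 0 < (n : ℝ) ^ t * e ^ n := by positivity
  rw [Real.norm_of_nonneg (by positivity), Real.norm_of_nonneg hpos.le, hsplit] at hbound
  nlinarith

theorem tendsto_const_rpow_inv_natCast {c : ℝ} (hc : c ≠ 0) :
    Tendsto (fun n : ℕ => c ^ (n : ℝ)⁻¹) atTop (𝓝 1) := by
  simpa [Function.comp_def] using
    (Real.continuousAt_const_rpow hc).tendsto.comp tendsto_inv_atTop_nhds_zero_nat

section Domination

open Finset

variable {ι : Type*} [Fintype ι] [Nonempty ι] {u : ℕ → ℝ} {v : ι → ℕ → ℝ}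

theorem tendsto_rpow_inv_of_le_of_le_sum {e : ι → ℝ}
    (hv : ∀ i n, 0 ≤ v i n) (hlow : ∀ i n, v i n ≤ u n) (hup : ∀ n, u n ≤ ∑ i, v i n)
    (he : ∀ i, Tendsto (fun n => v i n ^ (n : ℝ)⁻¹) atTop (𝓝 (e i))) :
    Tendsto (fun n => u n ^ (n : ℝ)⁻¹) atTop (𝓝 (univ.sup' univ_nonempty e)) := by
  set g : ℕ → ℝ := fun n => univ.sup' univ_nonempty fun i => v i n ^ (n : ℝ)⁻¹
  have hg : Tendsto g atTop (𝓝 (univ.sup' univ_nonempty e)) :=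
    Tendsto.finset_sup'_nhds_apply _ fun i _ => he i
  have hcard : Tendsto (fun n : ℕ => (Fintype.card ι : ℝ) ^ (n : ℝ)⁻¹ * g n) atTop
      (𝓝 (univ.sup' univ_nonempty e)) := by
    simpa using (tendsto_const_rpow_inv_natCast (by positivity)).mul hg
  refine tendsto_of_tendsto_of_tendsto_of_le_of_le hg hcard (fun n => ?_) (fun n => ?_)
  · exact sup'_le _ _ fun i _ =>
      Real.rpow_le_rpow (hv i n) (hlow i n) (by positivity)
  · obtain ⟨j, -, hj⟩ := exists_mem_eq_sup' univ_nonempty fun i => v i n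
    have hu : u n ≤ Fintype.card ι * v j n :=
      calc u n ≤ ∑ i, v i n := hup n
        _ ≤ #univ • v j n :=
          sum_le_card_nsmul _ _ _ fun i _ => hj ▸ le_sup' (fun i => v i n) (mem_univ i)
        _ = Fintype.card ι * v j n := by rw [card_univ, nsmul_eq_mul]
    calc u n ^ (n : ℝ)⁻¹ ≤ (Fintype.card ι * v j n) ^ (n : ℝ)⁻¹ :=
          Real.rpow_le_rpow ((hv j n).trans (hlow j n)) hu (by positivity)
      _ = (Fintype.card ι : ℝ) ^ (n : ℝ)⁻¹ * v j n ^ (n : ℝ)⁻¹ :=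
          Real.mul_rpow (by positivity) (hv j n)
      _ ≤ (Fintype.card ι : ℝ) ^ (n : ℝ)⁻¹ * g n :=
          mul_le_mul_of_nonneg_left (le_sup' (fun i => v i n ^ (n : ℝ)⁻¹) (mem_univ j))
            (by positivity)

theorem isLUB_of_isTheta_rpow_mul_pow {E t : ℝ} {e s : ι → ℝ} (hE : 0 < E)
    (he : ∀ i, 0 ≤ e i) (heE : ∀ i, e i ≤ E)
    (hv : ∀ i n, 0 ≤ v i n) (hlow : ∀ i n, v i n ≤ u n) (hup : ∀ n, u n ≤ ∑ i, v i n)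
    (hu : u =Θ[atTop] fun n => (n : ℝ) ^ t * E ^ n)
    (hvi : ∀ i, v i =Θ[atTop] fun n => (n : ℝ) ^ s i * e i ^ n) :
    IsLUB {x | ∃ j, e j = E ∧ x = s j} t := by
  have hvu : ∀ i, v i =O[atTop] u := fun i =>
    isBigO_of_le _ fun n => by
      rw [Real.norm_of_nonneg (hv i n), Real.norm_of_nonneg ((hv i n).trans (hlow i n))]
      exact hlow i n
  have husum : u =O[atTop] fun n => ∑ i, v i n :=
    isBigO_of_le _ fun n => by
      rw [Real.norm_of_nonneg ((hv (Classical.arbitrary ι) n).trans (hlow _ n)),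
        Real.norm_of_nonneg (sum_nonneg fun i _ => hv i n)]
      exact hup n
  refine ⟨?_, fun T hT => ?_⟩
  · rintro _ ⟨j, rfl, rfl⟩
    exact le_of_isBigO_rpow_mul_pow hE ((hvi j).2.trans ((hvu j).trans hu.1))
  · refine le_of_isBigO_rpow_mul_pow hE (hu.2.trans (husum.trans ?_))
    refine IsBigO.fun_sum fun i _ => (hvi i).1.trans ?_
    exact isBigO_rpow_mul_pow_of_le (he i) (heE i) fun h => hT ⟨i, h, rfl⟩

end Domination

end Asymptotics

section Codimension

variable {F}

instance (n : ℕ) : FiniteDimensional F (Pn F n) :=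
  FiniteDimensional.span_of_finite F <| (Set.finite_range fun σ : Equiv.Perm (Fin n) =>
    (List.ofFn fun i : Fin n => FreeAlgebra.ι F ((σ i : Fin n) : ℕ)).prod).subset
      (by rintro w ⟨σ, rfl⟩; exact ⟨σ, rfl⟩)

theorem finrank_quotient_le_of_le {K M : Type*} [DivisionRing K] [AddCommGroup M] [Module K M]
    [FiniteDimensional K M] {N₁ N₂ : Submodule K M} (h : N₁ ≤ N₂) :
    Module.finrank K (M ⧸ N₂) ≤ Module.finrank K (M ⧸ N₁) := by
  have h₁ := N₁.finrank_quotient_add_finrank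
  have h₂ := N₂.finrank_quotient_add_finrank
  have := Submodule.finrank_mono h
  omega

theorem finrank_quotient_iInf_le_sum {K M ι : Type*} [DivisionRing K] [AddCommGroup M]
    [Module K M] [FiniteDimensional K M] [Fintype ι] (N : ι → Submodule K M) :
    Module.finrank K (M ⧸ ⨅ i, N i) ≤ ∑ i, Module.finrank K (M ⧸ N i) := by
  set f : M →ₗ[K] ∀ i, M ⧸ N i := LinearMap.pi fun i => (N i).mkQ
  have hker : LinearMap.ker f = ⨅ i, N i := by simp [f, LinearMap.ker_pi]
  calc Module.finrank K (M ⧸ ⨅ i, N i) = Module.finrank K (LinearMap.range f) :=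
        hker ▸ f.quotKerEquivRange.finrank_eq
    _ ≤ Module.finrank K (∀ i, M ⧸ N i) := Submodule.finrank_le _
    _ = ∑ i, Module.finrank K (M ⧸ N i) := Module.finrank_pi_fintype K

theorem IdSet_pi {ι : Type} (B : ι → Type) [∀ i, Ring (B i)] [∀ i, Algebra F (B i)] :
    IdSet F (∀ i, B i) = ⨅ i, IdSet F (B i) := by
  classical
  ext f
  simp only [Submodule.mem_iInf]
  refine ⟨fun hf i φ => ?_, fun hf φ => funext fun i => hf i ((Pi.evalAlgHom F B i).comp φ)⟩
  -- extend `φ` to the product by zero-valued evaluations in the other factors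
  let ψ : FreeAlgebra F ℕ →ₐ[F] ∀ j, B j := AlgHom.pi fun j =>
    if h : j = i then h ▸ φ else FreeAlgebra.lift F fun _ => 0
  simpa [ψ] using congrFun (hf ψ) i

theorem codim_le_codim_of_IdSet_le {W₁ W₂ : Type} [Ring W₁] [Algebra F W₁] [Ring W₂]
    [Algebra F W₂] (h : IdSet F W₁ ≤ IdSet F W₂) (n : ℕ) : codim F W₂ n ≤ codim F W₁ n :=
  finrank_quotient_le_of_le (Submodule.comap_mono h)

theorem codim_le_codim_pi {ι : Type} (B : ι → Type) [∀ i, Ring (B i)] [∀ i, Algebra F (B i)]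
    (i : ι) (n : ℕ) : codim F (B i) n ≤ codim F (∀ i, B i) n :=
  codim_le_codim_of_IdSet_le ((IdSet_pi B).trans_le (iInf_le _ i)) n

theorem codim_pi_le_sum {ι : Type} [Fintype ι] (B : ι → Type) [∀ i, Ring (B i)]
    [∀ i, Algebra F (B i)] (n : ℕ) : codim F (∀ i, B i) n ≤ ∑ i, codim F (B i) n := by
  unfold codim
  rw [IdSet_pi, Submodule.comap_iInf]
  exact finrank_quotient_iInf_le_sum _

theorem PIequiv.codim_eq {W₁ W₂ : Type} [Ring W₁] [Algebra F W₁] [Ring W₂] [Algebra F W₂]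
    (h : PIequiv F W₁ W₂) (n : ℕ) : codim F W₁ n = codim F W₂ n := by
  unfold codim; rw [h]

theorem IdSet_eq_top_of_subsingleton (W : Type) [Ring W] [Algebra F W] [Subsingleton W] :
    IdSet F W = ⊤ :=
  eq_top_iff.2 fun _ _ _ => Subsingleton.elim _ _

theorem IsBasic.nontrivial {W : Type} [Ring W] [Algebra F W] (h : IsBasic F W) :
    Nontrivial W := by
  by_contra hW
  rw [not_nontrivial_iff_subsingleton] at hW
  refine h ⟨0, Fin.elim0, fun i => i.elim0, ?_⟩
  unfold PIequiv
  rw [IdSet_eq_top_of_subsingleton, IdSet_eq_top_of_subsingleton]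

theorem one_le_codim (W : Type) [Ring W] [Algebra F W] [Nontrivial W] (n : ℕ) :
    1 ≤ codim F W n := by
  set p := (List.ofFn fun i : Fin n => FreeAlgebra.ι F (i : ℕ)).prod
  have hpPn : p ∈ Pn F n := Submodule.subset_span ⟨1, rfl⟩
  have hpId : p ∉ IdSet F W := fun h => by
    simpa [p, map_list_prod, Function.comp_def] using h (FreeAlgebra.lift F fun _ => (1 : W))
  have : Nontrivial (Pn F n ⧸ Submodule.comap (Pn F n).subtype (IdSet F W)) :=
    Submodule.Quotient.nontrivial_iff.2 fun htop =>
      hpId (Submodule.mem_comap.1 (htop ▸ Submodule.mem_top : (⟨p, hpPn⟩ : Pn F n) ∈ _))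
  exact Module.finrank_pos

end Codimension

section Growth

open Filter Asymptotics

variable {F}

theorem HasExponent.one_le {W : Type} [Ring W] [Algebra F W] [Nontrivial W] {e : ℝ}
    (h : HasExponent F W e) : 1 ≤ e :=
  ge_of_tendsto h <| Eventually.of_forall fun n =>
    Real.one_le_rpow (by exact_mod_cast one_le_codim W n) (by positivity)

theorem HasPolyPart.isTheta {W : Type} [Ring W] [Algebra F W] {e t : ℝ} (he : 0 ≤ e)
    (h : HasPolyPart F W e t) :
    (fun n => (codim F W n : ℝ)) =Θ[atTop] fun n => (n : ℝ) ^ t * e ^ n := by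
  obtain ⟨c₁, c₂, hc₁, -, N, hN⟩ := h
  have hnorm : ∀ n : ℕ, ‖(n : ℝ) ^ t * e ^ n‖ = (n : ℝ) ^ t * e ^ n := fun n =>
    Real.norm_of_nonneg (by positivity)
  refine ⟨IsBigO.of_bound c₂ ?_, IsBigO.of_bound c₁⁻¹ ?_⟩ <;>
    filter_upwards [eventually_ge_atTop N] with n hn <;>
    simp only [hnorm, Real.norm_natCast]
  · linarith [(hN n hn).2, mul_assoc c₂ ((n : ℝ) ^ t) (e ^ n)]
  · rw [inv_mul_eq_div, le_div_iff₀' hc₁, ← mul_assoc]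
    exact (hN n hn).1

end Growth

theorem statement5_general {F : Type} [Field F]
    {A : Type} [Ring A] [Algebra F A]
    {l : ℕ} (hl : 0 < l) (B : Fin l → FDAlg F)
    (hbasic : ∀ i, IsBasic F (B i).carrier)
    (hequiv : PIequiv F A (∀ i, (B i).carrier))
    (eA : ℝ) (heA : HasExponent F A eA)
    (eB : Fin l → ℝ) (heB : ∀ i, HasExponent F (B i).carrier (eB i))
    (tA : ℝ) (htA : HasPolyPart F A eA tA)
    (tB : Fin l → ℝ) (htB : ∀ i, HasPolyPart F (B i).carrier (eB i) (tB i)) :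
    eA = ⨆ i, eB i ∧
    tA = sSup {x : ℝ | ∃ j, eB j = eA ∧ x = tB j} := by
  have : Nonempty (Fin l) := ⟨⟨0, hl⟩⟩
  have := fun i => (hbasic i).nontrivial
  have hlow : ∀ i n, (codim F (B i).carrier n : ℝ) ≤ codim F A n := fun i n => by
    exact_mod_cast (codim_le_codim_pi (F := F) (fun i => (B i).carrier) i n).trans_eq
      (hequiv.codim_eq n).symm
  have hup : ∀ n, (codim F A n : ℝ) ≤ ∑ i, (codim F (B i).carrier n : ℝ) := fun n => by
    exact_mod_cast (hequiv.codim_eq n).trans_le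
      (codim_pi_le_sum (F := F) (fun i => (B i).carrier) n)
  have hexp : eA = Finset.univ.sup' Finset.univ_nonempty eB :=
    tendsto_nhds_unique heA
      (tendsto_rpow_inv_of_le_of_le_sum (fun _ _ => Nat.cast_nonneg _) hlow hup heB)
  have heB₀ : ∀ i, 0 ≤ eB i := fun i => zero_le_one.trans (heB i).one_le
  have heBA : ∀ i, eB i ≤ eA := fun i => hexp ▸ Finset.le_sup' eB (Finset.mem_univ i)
  obtain ⟨j, -, hj⟩ := Finset.exists_mem_eq_sup' Finset.univ_nonempty eB
  have hjA : eB j = eA := (hexp.trans hj).symm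
  have hlub : IsLUB {x | ∃ j, eB j = eA ∧ x = tB j} tA :=
    isLUB_of_isTheta_rpow_mul_pow (hjA ▸ zero_lt_one.trans_le (heB j).one_le) heB₀ heBA
      (fun _ _ => Nat.cast_nonneg _) hlow hup (htA.isTheta (hjA ▸ heB₀ j))
      fun i => (htB i).isTheta (heB₀ i)
  exact ⟨hexp.trans (Finset.sup'_univ_eq_ciSup eB), (hlub.csSup_eq ⟨tB j, j, hjA, rfl⟩).symm⟩

/-- If the finite-dimensional algebra `A` is PI-equivalent to a direct
product `B_1 × ⋯ × B_l` of basic algebras, then `exp(A) = max_i exp(B_i)` and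
`t(A) = max { t(B_j) : exp(B_j) = exp(A) }`. -/
theorem statement5 {F : Type} [Field F] [IsAlgClosed F] [CharZero F]
    {A : Type} [Ring A] [Algebra F A] [FiniteDimensional F A]
    {l : ℕ} (hl : 0 < l) (B : Fin l → FDAlg F)
    (hbasic : ∀ i, IsBasic F (B i).carrier)
    (hequiv : PIequiv F A (∀ i, (B i).carrier))
    (eA : ℝ) (heA : HasExponent F A eA)
    (eB : Fin l → ℝ) (heB : ∀ i, HasExponent F (B i).carrier (eB i))
    (tA : ℝ) (htA : HasPolyPart F A eA tA)
    (tB : Fin l → ℝ) (htB : ∀ i, HasPolyPart F (B i).carrier (eB i) (tB i)) :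
    eA = ⨆ i, eB i ∧
    tA = sSup {x : ℝ | ∃ j, eB j = eA ∧ x = tB j} :=
  statement5_general hl B hbasic hequiv eA heA eB heB tA htA tB htB

end PIDim
end
end

section
/- Let V and W be finite-dimensional vector spaces over a field F with W ≠ 0, let U be a linear subspace of Hom_F(V, W), fix a basis w_1, …, w_m of W, and let ψ_1, …, ψ_m ∈ W* be the dual basis. Then there exists an index i such that dim_F (ψ_i ∘ U) ≥ dim_F U / dim_F W, where ψ_i ∘ U = {ψ_i ∘ T : T ∈ U} ⊆ V*. -/
/-!
The dual basis separates the points of `W`, so `T ↦ (ψ_i ∘ T)_i` embeds `U` into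
`∏_i ψ_i ∘ U`. Hence `dim U ≤ ∑_i dim (ψ_i ∘ U)`, and one of the `m = dim W` summands is at
least the average.
-/

open Module

theorem Submodule.finrank_le_sum_finrank_map {K M ι : Type*} {N : ι → Type*} [DivisionRing K]
    [AddCommGroup M] [Module K M] [∀ i, AddCommGroup (N i)] [∀ i, Module K (N i)] [Fintype ι]
    (φ : ∀ i, M →ₗ[K] N i) (hφ : Function.Injective (LinearMap.pi φ)) (U : Submodule K M) :
    finrank K U ≤ ∑ i, finrank K (U.map (φ i)) := by
  by_cases hU : FiniteDimensional K U
  · have hinj : Function.Injective (LinearMap.pi fun i => (φ i).submoduleMap U) := by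
      intro x y hxy
      exact Subtype.ext <| hφ <| funext fun i => congrArg Subtype.val (congrFun hxy i)
    simpa only [finrank_pi_fintype] using LinearMap.finrank_le_finrank_of_injective hinj
  · simp [finrank_of_not_finite hU]

theorem LinearMap.injective_pi_llcomp {R V W ι : Type*} {N : ι → Type*} [CommRing R]
    [AddCommGroup V] [Module R V] [AddCommGroup W] [Module R W]
    [∀ i, AddCommGroup (N i)] [∀ i, Module R (N i)]
    (ψ : ∀ i, W →ₗ[R] N i) (hψ : Function.Injective (LinearMap.pi ψ)) :
    Function.Injective (LinearMap.pi fun i =>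
      (LinearMap.llcomp R V W (N i) (ψ i) : (V →ₗ[R] W) →ₗ[R] V →ₗ[R] N i)) := by
  intro S T hST
  ext v
  exact hψ <| funext fun i => LinearMap.congr_fun (congrFun hST i) v

theorem Module.Basis.injective_pi_dualBasis {R W ι : Type*} [CommRing R] [AddCommGroup W]
    [Module R W] [DecidableEq ι] [Finite ι] (b : Basis ι R W) :
    Function.Injective (LinearMap.pi b.dualBasis) := by
  intro x y hxy
  exact b.ext_elem fun i => by simpa [Basis.dualBasis_apply] using congrFun hxy i

theorem exists_div_card_le_of_le_sum {ι : Type*} [Fintype ι] [Nonempty ι] {n : ℕ} {d : ι → ℕ}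
    (h : n ≤ ∑ i, d i) : ∃ i, (n : ℝ) / Fintype.card ι ≤ d i := by
  have hn : (n : ℝ) ≤ ∑ i, (d i : ℝ) := by exact_mod_cast h
  obtain ⟨i, -, hi⟩ := Finset.exists_le_of_sum_le (f := fun _ => (n : ℝ) / Fintype.card ι)
    (g := fun i => (d i : ℝ)) Finset.univ_nonempty (by simpa [mul_div_cancel₀] using hn)
  exact ⟨i, hi⟩

theorem statement11_general {F V W : Type} [Field F]
    [AddCommGroup V] [Module F V] [AddCommGroup W] [Module F W]
    [Nontrivial W]
    {m : ℕ} (w : Module.Basis (Fin m) F W) (U : Submodule F (V →ₗ[F] W)) :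
    ∃ i : Fin m,
      (Module.finrank F ↥U : ℝ) / (Module.finrank F W : ℝ) ≤
        (Module.finrank F
          ↥(U.map ((LinearMap.llcomp F V W F) (w.dualBasis i))) : ℝ) := by
  have : Nonempty (Fin m) := w.index_nonempty
  rw [finrank_eq_card_basis w]
  exact exists_div_card_le_of_le_sum <| U.finrank_le_sum_finrank_map _ <|
    LinearMap.injective_pi_llcomp _ w.injective_pi_dualBasis

/-- Let `V`, `W` be finite-dimensional vector spaces with `W ≠ 0`, let
`U ⊆ Hom_F(V, W)` be a subspace, and fix a basis `w_1, …, w_m` of `W` with dual basis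
`ψ_1, …, ψ_m`. Then some `ψ_i` satisfies `dim (ψ_i ∘ U) ≥ dim U / dim W`. -/
theorem statement11 {F V W : Type} [Field F]
    [AddCommGroup V] [Module F V] [AddCommGroup W] [Module F W]
    [FiniteDimensional F V] [FiniteDimensional F W] [Nontrivial W]
    {m : ℕ} (w : Module.Basis (Fin m) F W) (U : Submodule F (V →ₗ[F] W)) :
    ∃ i : Fin m,
      (Module.finrank F ↥U : ℝ) / (Module.finrank F W : ℝ) ≤
        (Module.finrank F
          ↥(U.map ((LinearMap.llcomp F V W F) (w.dualBasis i))) : ℝ) :=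
  statement11_general w U
end

section
/- (Regev–Beckner) Let r_1, …, r_q ∈ ℝ and k_1, …, k_q ∈ ℝ with k_i > 0 for all i, and set k = k_1 + ⋯ + k_q and r = r_1 + ⋯ + r_q. Then, as n → ∞, Σ_{n_1+⋯+n_q=n} (n choose n_1,…,n_q) k_1^{n_1} ⋯ k_q^{n_q} n_1^{r_1} ⋯ n_q^{r_q} ∼ ((k_1/k)^{r_1} ⋯ (k_q/k)^{r_q}) · n^r k^n, i.e. the ratio of the two sides tends to 1. -/
/-!
With `p i = k i / k`, the sum equals `k ^ n * n ^ r` times the expectation of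
`∏ i, (n_i / n) ^ r_i` under the multinomial distribution `Mult(n, p)`, restricted to tuples
with positive entries. A Chernoff bound (exponential tilting of one coordinate by `e ^ (± t)`)
shows that the multinomial mass outside the box `|n_i - p_i n| < δ n` decays like `e ^ (-β n)`,
while on positive tuples the integrand is at most `n ^ (∑ |r_i|)`; inside the box, continuity of
`x ↦ ∏ x_i ^ r_i` at `p` gives the limit `∏ p_i ^ r_i`.
-/

noncomputable section

open Finset Filter Topology Real

lemma sum_filter_le_sum_sum_filter {α κ M : Type*} [AddCommMonoid M] [PartialOrder M]
    [IsOrderedAddMonoid M] {s : Finset α} {t : Finset κ} {f : α → M} (hf : ∀ x ∈ s, 0 ≤ f x)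
    (B : α → Prop) (P : κ → α → Prop) [DecidablePred B] [∀ k, DecidablePred (P k)]
    (hBP : ∀ x ∈ s, B x → ∃ k ∈ t, P k x) :
    ∑ x ∈ s.filter B, f x ≤ ∑ k ∈ t, ∑ x ∈ s.filter (P k), f x := by
  simp only [sum_filter]
  rw [sum_comm]
  refine sum_le_sum fun x hx => ?_
  split_ifs with hB
  · obtain ⟨k, hk, hPk⟩ := hBP x hx hB
    calc f x = if P k x then f x else 0 := (if_pos hPk).symm
      _ ≤ ∑ k ∈ t, if P k x then f x else 0 :=
        single_le_sum (f := fun k => if P k x then f x else 0)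
          (fun k _ => by split_ifs <;> simp [hf x hx]) hk
  · exact sum_nonneg fun k _ => by split_ifs <;> simp [hf x hx]

lemma abs_sum_mul_sub_le {α : Type*} {s : Finset α} {w g : α → ℝ} {a η M : ℝ}
    (hw : ∀ x ∈ s, 0 ≤ w x) (hw1 : ∑ x ∈ s, w x = 1) (hη : 0 ≤ η) (B : α → Prop)
    [DecidablePred B] (hgood : ∀ x ∈ s, ¬ B x → |g x - a| ≤ η) (hM : ∀ x ∈ s, |g x - a| ≤ M) :
    |∑ x ∈ s, w x * g x - a| ≤ η + M * ∑ x ∈ s.filter B, w x := by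
  have hgood_le : ∑ x ∈ s.filter (fun x => ¬ B x), w x * |g x - a| ≤ η := calc
    _ ≤ ∑ x ∈ s.filter (fun x => ¬ B x), w x * η := sum_le_sum fun x hx =>
          mul_le_mul_of_nonneg_left (hgood x (mem_filter.1 hx).1 (mem_filter.1 hx).2)
            (hw x (mem_filter.1 hx).1)
    _ ≤ ∑ x ∈ s, w x * η := sum_le_sum_of_subset_of_nonneg (filter_subset _ _)
          fun x hx _ => mul_nonneg (hw x hx) hη
    _ = η := by rw [← sum_mul, hw1, one_mul]
  have hbad_le : ∑ x ∈ s.filter B, w x * |g x - a| ≤ M * ∑ x ∈ s.filter B, w x := by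
    rw [mul_sum]
    exact sum_le_sum fun x hx => by
      rw [mul_comm M]
      exact mul_le_mul_of_nonneg_left (hM x (mem_filter.1 hx).1) (hw x (mem_filter.1 hx).1)
  calc |∑ x ∈ s, w x * g x - a| = |∑ x ∈ s, w x * (g x - a)| := by
        simp only [mul_sub, sum_sub_distrib, ← sum_mul, hw1, one_mul]
    _ ≤ ∑ x ∈ s, w x * |g x - a| := (abs_sum_le_sum_abs _ _).trans_eq
        (sum_congr rfl fun x hx => by rw [abs_mul, abs_of_nonneg (hw x hx)])
    _ = ∑ x ∈ s.filter B, w x * |g x - a| + ∑ x ∈ s.filter (fun x => ¬ B x), w x * |g x - a| :=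
        (sum_filter_add_sum_filter_not _ _ _).symm
    _ ≤ η + M * ∑ x ∈ s.filter B, w x := by linarith

section MultinomialWeight

variable {ι : Type*} [Fintype ι]

def multinomialWeight (p : ι → ℝ) (c : ι → ℕ) : ℝ :=
  Nat.multinomial univ c * ∏ i, p i ^ c i

lemma multinomialWeight_nonneg {p : ι → ℝ} (hp : ∀ i, 0 ≤ p i) (c : ι → ℕ) :
    0 ≤ multinomialWeight p c :=
  mul_nonneg (Nat.cast_nonneg _) (prod_nonneg fun i _ => pow_nonneg (hp i) _)

lemma multinomialWeight_mul_prod_pow (p x : ι → ℝ) (c : ι → ℕ) :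
    multinomialWeight p c * ∏ i, x i ^ c i = multinomialWeight (fun i => p i * x i) c := by
  simp only [multinomialWeight, mul_pow, prod_mul_distrib, mul_assoc]

variable [DecidableEq ι]

lemma sum_multinomialWeight (p : ι → ℝ) (n : ℕ) :
    ∑ c ∈ univ.piAntidiag n, multinomialWeight p c = (∑ i, p i) ^ n :=
  (sum_pow_eq_sum_piAntidiag univ p n).symm

lemma sum_multinomialWeight_filter_le {p x : ι → ℝ} (hp : ∀ i, 0 ≤ p i) (hx : ∀ i, 0 ≤ x i)
    {a : ℝ} (ha : 0 < a) (n : ℕ) (P : (ι → ℕ) → Prop) [DecidablePred P]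
    (hP : ∀ c, P c → a ^ n ≤ ∏ i, x i ^ c i) :
    ∑ c ∈ (univ.piAntidiag n).filter P, multinomialWeight p c ≤ ((∑ i, p i * x i) / a) ^ n := by
  have hweight : ∀ c, 0 ≤ multinomialWeight p c * ((∏ i, x i ^ c i) / a ^ n) := fun c =>
    mul_nonneg (multinomialWeight_nonneg hp c)
      (div_nonneg (prod_nonneg fun i _ => pow_nonneg (hx i) _) (by positivity))
  calc ∑ c ∈ (univ.piAntidiag n).filter P, multinomialWeight p c
      ≤ ∑ c ∈ (univ.piAntidiag n).filter P,
          multinomialWeight p c * ((∏ i, x i ^ c i) / a ^ n) :=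
        sum_le_sum fun c hc => le_mul_of_one_le_right (multinomialWeight_nonneg hp c)
          ((one_le_div (by positivity)).2 (hP c (mem_filter.1 hc).2))
    _ ≤ ∑ c ∈ univ.piAntidiag n, multinomialWeight p c * ((∏ i, x i ^ c i) / a ^ n) :=
        sum_le_sum_of_subset_of_nonneg (filter_subset _ _) fun c _ _ => hweight c
    _ = ((∑ i, p i * x i) / a) ^ n := by
        simp only [← mul_div_assoc, multinomialWeight_mul_prod_pow, ← sum_div,
          sum_multinomialWeight, div_pow]

/-- Chernoff's bound, obtained by tilting the `i`-th coordinate by `e ^ u`. -/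
lemma sum_multinomialWeight_filter_le_exp {p : ι → ℝ} (hp : ∀ i, 0 ≤ p i)
    (hs : ∑ i, p i = 1) (i : ι) {u : ℝ} (hu : |u| ≤ 1) (δ : ℝ) (n : ℕ) :
    ∑ c ∈ (univ.piAntidiag n).filter (fun c => (u * p i + |u| * δ) * n ≤ u * c i),
        multinomialWeight p c ≤ exp ((u ^ 2 - |u| * δ) * n) := by
  set x : ι → ℝ := Pi.mulSingle i (exp u)
  have hx : ∀ j, 0 ≤ x j := fun j => by
    by_cases h : j = i
    · subst h; simp [x, (exp_pos u).le]
    · simp [x, h]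
  have hprod : ∀ c : ι → ℕ, ∏ j, x j ^ c j = exp (u * c i) := fun c => by
    rw [prod_eq_single i (fun j _ hj => by simp [x, hj]) (by simp), mul_comm, exp_nat_mul]
    simp [x]
  have hsum : ∑ j, p j * x j = 1 + p i * (exp u - 1) := by
    have htilt : ∑ j, p j * x j - ∑ j, p j = p i * (exp u - 1) := by
      rw [← sum_sub_distrib, sum_eq_single i (fun j _ hj => by simp [x, hj]) (by simp)]
      simp [x]; ring
    linarith
  have hpi : p i ≤ 1 := hs ▸ single_le_sum (fun j _ => hp j) (mem_univ i)
  calc _ ≤ ((∑ j, p j * x j) / exp (u * p i + |u| * δ)) ^ n :=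
        sum_multinomialWeight_filter_le hp hx (exp_pos _) n _ fun c hc => by
          rw [hprod, ← exp_nat_mul, exp_le_exp]; linarith
    _ ≤ exp (u ^ 2 - |u| * δ) ^ n := by
        refine pow_le_pow_left₀ (div_nonneg (sum_nonneg fun j _ => mul_nonneg (hp j) (hx j))
          (exp_pos _).le) ?_ n
        rw [div_le_iff₀ (exp_pos _), ← exp_add, hsum]
        have hexp : exp u - 1 ≤ u + u ^ 2 := by
          have := abs_exp_sub_one_sub_id_le hu; linarith [(abs_le.1 this).2]
        calc 1 + p i * (exp u - 1) ≤ 1 + (p i * u + u ^ 2) := by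
              nlinarith [mul_le_mul_of_nonneg_left hexp (hp i), sq_nonneg u]
          _ ≤ _ := by
              rw [add_comm]; refine (add_one_le_exp _).trans (exp_le_exp.2 (by linarith))
    _ = exp ((u ^ 2 - |u| * δ) * n) := by rw [← exp_nat_mul, mul_comm]

lemma exists_sum_multinomialWeight_far_le {p : ι → ℝ} (hp : ∀ i, 0 ≤ p i) (hs : ∑ i, p i = 1)
    {δ : ℝ} (hδ : 0 < δ) :
    ∃ β > 0, ∀ n : ℕ,
      ∑ c ∈ (univ.piAntidiag n).filter (fun c => ∃ i, δ * n ≤ |(c i : ℝ) - p i * n|),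
        multinomialWeight p c ≤ 2 * Fintype.card ι * exp (-β * n) := by
  set t := min 1 (δ / 2)
  have ht0 : 0 < t := lt_min one_pos (half_pos hδ)
  have ht1 : t ≤ 1 := min_le_left _ _
  have htδ : t ≤ δ / 2 := min_le_right _ _
  refine ⟨t * (δ - t), mul_pos ht0 (by linarith), fun n => ?_⟩
  calc _ ≤ ∑ iu ∈ univ ×ˢ {t, -t}, ∑ c ∈ (univ.piAntidiag n).filter
          (fun c => (iu.2 * p iu.1 + |iu.2| * δ) * n ≤ iu.2 * c iu.1), multinomialWeight p c := by
        refine sum_filter_le_sum_sum_filter (fun c _ => multinomialWeight_nonneg hp c) _ _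
          fun c _ ⟨i, hi⟩ => ?_
        rcases le_abs'.1 hi with h | h
        · exact ⟨(i, -t), by simp, by rw [abs_neg, abs_of_pos ht0]; nlinarith⟩
        · exact ⟨(i, t), by simp, by rw [abs_of_pos ht0]; nlinarith⟩
    _ ≤ ∑ iu ∈ univ ×ˢ {t, -t}, exp (-(t * (δ - t)) * n) := by
        refine sum_le_sum fun ⟨i, u⟩ hiu => ?_
        have hu : |u| = t := by
          rcases (by simpa using hiu : u = t ∨ u = -t) with rfl | rfl <;> simp [abs_of_pos ht0]
        refine (sum_multinomialWeight_filter_le_exp hp hs i (hu ▸ ht1) δ n).trans_eq ?_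
        rw [← sq_abs u, hu]
        ring_nf
    _ ≤ 2 * Fintype.card ι * exp (-(t * (δ - t)) * n) := by
        rw [sum_const, nsmul_eq_mul, card_product, card_univ, Nat.cast_mul, mul_comm 2]
        gcongr
        exact_mod_cast card_le_two

theorem tendsto_sum_filter_pos_multinomialWeight_mul {p : ι → ℝ} (hp : ∀ i, 0 < p i)
    (hs : ∑ i, p i = 1) {f : (ι → ℝ) → ℝ} (hf : ContinuousAt f p) {C R : ℝ}
    (hbound : ∀ n : ℕ, 0 < n → ∀ c ∈ univ.piAntidiag n, (∀ i, 1 ≤ c i) →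
      |f (fun i => c i / n)| ≤ C * n ^ R) :
    Tendsto (fun n : ℕ => ∑ c ∈ (univ.piAntidiag n).filter (fun c => ∀ i, 1 ≤ c i),
      multinomialWeight p c * f (fun i => c i / n)) atTop (𝓝 (f p)) := by
  have : Nonempty ι := by
    by_contra h
    simp [not_nonempty_iff.1 h] at hs
  obtain ⟨i₀, hi₀⟩ := Finite.exists_min p
  -- `δ ≤ min p` forces every tuple in the box `|c i - p i n| < δ n` to have positive entries.
  rw [Metric.tendsto_atTop]
  intro ε hε
  obtain ⟨δ₀, hδ₀, hfδ₀⟩ := Metric.continuousAt_iff.1 hf (ε / 2) (half_pos hε)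
  set δ := min δ₀ (p i₀)
  have hδ : 0 < δ := lt_min hδ₀ (hp i₀)
  obtain ⟨β, hβ, hfar⟩ := exists_sum_multinomialWeight_far_le (fun i => (hp i).le) hs hδ
  set M : ℕ → ℝ := fun n => |C| * n ^ R + |f p|
  have hsmall : Tendsto (fun n : ℕ => M n * (2 * Fintype.card ι * exp (-β * n))) atTop (𝓝 0) := by
    have hpoly : Tendsto (fun n : ℕ => (n : ℝ) ^ R * exp (-β * n)) atTop (𝓝 0) :=
      (tendsto_rpow_mul_exp_neg_mul_atTop_nhds_zero R β hβ).comp tendsto_natCast_atTop_atTop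
    have hexp : Tendsto (fun n : ℕ => exp (-β * n)) atTop (𝓝 0) := by
      simpa only [Function.comp_def, rpow_zero, one_mul] using
        (tendsto_rpow_mul_exp_neg_mul_atTop_nhds_zero 0 β hβ).comp
          tendsto_natCast_atTop_atTop
    have := ((hpoly.const_mul |C|).add (hexp.const_mul |f p|)).const_mul (2 * Fintype.card ι : ℝ)
    rw [mul_zero, mul_zero, add_zero, mul_zero] at this
    exact this.congr fun n => by simp only [M]; ring
  obtain ⟨N, hN⟩ := eventually_atTop.1
    ((hsmall.eventually (gt_mem_nhds (half_pos hε))).and (eventually_gt_atTop 0))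
  refine ⟨N, fun n hn => ?_⟩
  obtain ⟨hMn, hn0⟩ := hN n hn
  have hn0' : (0 : ℝ) < n := by exact_mod_cast hn0
  set g : (ι → ℕ) → ℝ := fun c => if ∀ i, 1 ≤ c i then f (fun i => c i / n) else 0
  have hnear : ∀ c ∈ univ.piAntidiag n, ¬ (∃ i, δ * n ≤ |(c i : ℝ) - p i * n|) →
      |g c - f p| ≤ ε / 2 := by
    intro c _ hc
    simp only [not_exists, not_le] at hc
    have hpos : ∀ i, 1 ≤ c i := fun i => by
      have := (abs_lt.1 (hc i)).1
      have : (0 : ℝ) < c i := by nlinarith [min_le_right δ₀ (p i₀), hi₀ i]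
      exact_mod_cast this
    have hdist : dist (fun i => (c i : ℝ) / n) p < δ₀ := by
      refine (dist_pi_lt_iff hδ₀).2 fun i => ?_
      rw [Real.dist_eq, div_sub' hn0'.ne', abs_div, abs_of_pos hn0', div_lt_iff₀ hn0',
        mul_comm (n : ℝ)]
      exact (hc i).trans_le (mul_le_mul_of_nonneg_right (min_le_left _ _) hn0'.le)
    simpa [g, hpos, Real.dist_eq] using (hfδ₀ hdist).le
  have hall : ∀ c ∈ univ.piAntidiag n, |g c - f p| ≤ M n := fun c hc => by
    have hC : 0 ≤ |C| * (n : ℝ) ^ R := by positivity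
    by_cases hpos : ∀ i, 1 ≤ c i
    · simp only [g, if_pos hpos]
      have hCle : C * (n : ℝ) ^ R ≤ |C| * n ^ R :=
        mul_le_mul_of_nonneg_right (le_abs_self C) (by positivity)
      linarith [abs_sub (f fun i => (c i : ℝ) / n) (f p), hbound n hn0 c hc hpos]
    · simp [g, hpos, M, hC]
  rw [Real.dist_eq]
  calc _ = |∑ c ∈ univ.piAntidiag n, multinomialWeight p c * g c - f p| := by
        simp only [g, mul_ite, mul_zero, sum_filter]
    _ ≤ ε / 2 + M n * (2 * Fintype.card ι * exp (-β * n)) := by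
        refine (abs_sum_mul_sub_le (fun c _ => multinomialWeight_nonneg (fun i => (hp i).le) c)
          (by rw [sum_multinomialWeight, hs, one_pow]) (half_pos hε).le _ hnear hall).trans ?_
        gcongr
        exact hfar n
    _ < ε := by linarith

end MultinomialWeight

lemma div_rpow_le_rpow_abs {x y : ℝ} (hx : 1 ≤ x) (hxy : x ≤ y) (r : ℝ) :
    (x / y) ^ r ≤ y ^ |r| := by
  have hy : 0 < y := by linarith
  rcases le_total 0 r with hr | hr
  · calc (x / y) ^ r ≤ 1 := rpow_le_one (by positivity) ((div_le_one hy).2 hxy) hr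
      _ ≤ y ^ |r| := one_le_rpow (by linarith) (abs_nonneg r)
  · calc (x / y) ^ r ≤ (1 / y) ^ r :=
          rpow_le_rpow_of_nonpos (by positivity) (div_le_div_of_nonneg_right hx hy.le) hr
      _ = y ^ |r| := by rw [abs_of_nonpos hr, one_div, inv_rpow hy.le, rpow_neg hy.le]

lemma prod_div_rpow_le {ι : Type*} [Fintype ι] [DecidableEq ι] {n : ℕ} (hn : 0 < n)
    {c : ι → ℕ} (hc : c ∈ univ.piAntidiag n) (hpos : ∀ i, 1 ≤ c i) (r : ι → ℝ) :
    ∏ i, ((c i : ℝ) / n) ^ r i ≤ (n : ℝ) ^ ∑ i, |r i| := by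
  have hcn : ∀ i, c i ≤ n := fun i =>
    (mem_piAntidiag.1 hc).1 ▸ single_le_sum (fun j _ => Nat.zero_le (c j)) (mem_univ i)
  calc ∏ i, ((c i : ℝ) / n) ^ r i ≤ ∏ i, (n : ℝ) ^ |r i| :=
        prod_le_prod (fun i _ => by positivity) fun i _ =>
          div_rpow_le_rpow_abs (by exact_mod_cast hpos i) (by exact_mod_cast hcn i) _
    _ = (n : ℝ) ^ ∑ i, |r i| := (rpow_sum_of_pos (by exact_mod_cast hn) _ _).symm

lemma Finset.Nat.antidiagonalTuple_eq_piAntidiag (q n : ℕ) :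
    Finset.Nat.antidiagonalTuple q n = univ.piAntidiag n := by
  ext c; simp [mem_antidiagonalTuple]

lemma prod_pow_mul_rpow_eq {ι : Type*} [Fintype ι] (k r : ι → ℝ) {K : ℝ} (hK : 0 < K) {n : ℕ}
    (hn : 0 < n) {c : ι → ℕ} (hc : ∑ i, c i = n) :
    ∏ i, (k i ^ c i * (c i : ℝ) ^ r i) =
      K ^ n * (n : ℝ) ^ (∑ i, r i) * ((∏ i, (k i / K) ^ c i) * ∏ i, ((c i : ℝ) / n) ^ r i) := by
  have hn' : (0 : ℝ) < n := by exact_mod_cast hn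
  have hfactor : ∀ i, k i ^ c i * (c i : ℝ) ^ r i =
      (K ^ c i * (n : ℝ) ^ r i) * ((k i / K) ^ c i * ((c i : ℝ) / n) ^ r i) := fun i => by
    rw [div_pow, div_rpow (Nat.cast_nonneg _) hn'.le]
    field_simp
  simp only [hfactor, prod_mul_distrib, prod_pow_eq_pow_sum, hc, rpow_sum_of_pos hn']

/-- **Regev–Beckner.** For reals `r_1,…,r_q` and positive reals
`k_1,…,k_q`, with `k = k_1 + ⋯ + k_q` and `r = r_1 + ⋯ + r_q`,
`Σ_{n_1+⋯+n_q=n} (n choose n_1,…,n_q) k_1^{n_1} ⋯ k_q^{n_q} n_1^{r_1} ⋯ n_q^{r_q}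
  ∼ ((k_1/k)^{r_1} ⋯ (k_q/k)^{r_q}) n^r k^n`
(as usual, the sum is restricted to tuples of positive integers). -/
theorem statement13 {q : ℕ} (hq : 0 < q) (r k : Fin q → ℝ) (hk : ∀ i, 0 < k i) :
    Filter.Tendsto
      (fun n : ℕ =>
        (∑ c ∈ (Finset.Nat.antidiagonalTuple q n).filter fun c => ∀ i, 1 ≤ c i,
            (Nat.multinomial Finset.univ c : ℝ) *
              ∏ i, (k i ^ c i * (c i : ℝ) ^ r i)) /
          ((∏ i, (k i / ∑ j, k j) ^ r i) *
            (n : ℝ) ^ (∑ i, r i) * (∑ j, k j) ^ n))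
      Filter.atTop (nhds 1) := by
  have : Nonempty (Fin q) := Fin.pos_iff_nonempty.1 hq
  set K := ∑ j, k j
  have hK : 0 < K := sum_pos (fun j _ => hk j) univ_nonempty
  set p : Fin q → ℝ := fun i => k i / K
  have hp : ∀ i, 0 < p i := fun i => div_pos (hk i) hK
  have hs : ∑ i, p i = 1 := by rw [← sum_div, div_self hK.ne']
  have hF : ContinuousAt (fun x : Fin q → ℝ => ∏ i, x i ^ r i) p :=
    tendsto_finsetProd _ fun i _ =>
      ((continuous_apply i).continuousAt.rpow_const (Or.inl (hp i).ne'))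
  have hF0 : ∏ i, p i ^ r i ≠ 0 := prod_ne_zero_iff.2 fun i _ => (rpow_pos_of_pos (hp i) _).ne'
  have hlim := (tendsto_sum_filter_pos_multinomialWeight_mul hp hs hF (C := 1)
    fun n hn c hc hpos => by
      rw [one_mul, abs_of_nonneg (prod_nonneg fun i _ => by positivity)]
      exact prod_div_rpow_le hn hc hpos r).div_const (∏ i, p i ^ r i)
  rw [div_self hF0] at hlim
  refine hlim.congr' ?_
  filter_upwards [eventually_gt_atTop 0] with n hn
  have hnum : ∑ c ∈ (Finset.Nat.antidiagonalTuple q n).filter (fun c => ∀ i, 1 ≤ c i),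
      (Nat.multinomial univ c : ℝ) * ∏ i, (k i ^ c i * (c i : ℝ) ^ r i) =
      K ^ n * (n : ℝ) ^ (∑ i, r i) * ∑ c ∈ (univ.piAntidiag n).filter (fun c => ∀ i, 1 ≤ c i),
        multinomialWeight p c * ∏ i, ((c i : ℝ) / n) ^ r i := by
    rw [Finset.Nat.antidiagonalTuple_eq_piAntidiag, mul_sum]
    refine sum_congr rfl fun c hc => ?_
    rw [prod_pow_mul_rpow_eq k r hK hn (mem_piAntidiag.1 (mem_filter.1 hc).1).1, multinomialWeight]
    ring
  rw [hnum]
  field_simp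
  -- the two filters differ only in their (equal) decidability instances
  convert (mul_div_cancel_left₀ _ hF0).symm
end
end

section
/- Let F be a field of characteristic 0, W an F-algebra, and R a nonzero commutative F-algebra that is an integral domain. Then for every n, c_n(W) = c_n(W ⊗_F R); in particular the codimension sequence is unchanged under extension of scalars, so for its computation one may assume F is algebraically closed. -/
open scoped TensorProduct


noncomputable section

namespace PIDim

variable (F : Type) [Field F]

/-! The spaces `P_n ∩ Id(W)` and `P_n ∩ Id(W ⊗ R)` coincide. Evaluating a multilinear `p` is a
multilinear map, so it vanishes on `W ⊗ R` once it vanishes on tuples of pure tensors `w ⊗ r`,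
where it equals `p(w) ⊗ ∏ r`. Conversely `w ↦ w ⊗ 1` embeds `W` in `W ⊗ R`, as `R ≠ 0` is flat
over the field `F`. -/

theorem _root_.MultilinearMap.eq_zero_of_span_eq_top {R ι : Type*} {M : ι → Type*} {N : Type*}
    [CommSemiring R] [∀ i, AddCommMonoid (M i)] [∀ i, Module R (M i)] [AddCommMonoid N]
    [Module R N] [Finite ι] (f : MultilinearMap R M N) {S : ∀ i, Set (M i)}
    (hS : ∀ i, Submodule.span R (S i) = ⊤) (hf : ∀ v, (∀ i, v i ∈ S i) → f v = 0) :
    f = 0 := by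
  classical
  have := Fintype.ofFinite ι
  -- Free the coordinates one at a time: with the others fixed, `f` is linear in the freed one.
  suffices key : ∀ s : Finset ι, ∀ v, (∀ i ∉ s, v i ∈ S i) → f v = 0 by
    ext v
    exact key Finset.univ v (by simp)
  intro s
  induction s using Finset.induction_on with
  | empty => exact fun v hv => hf v fun i => hv i (Finset.notMem_empty i)
  | insert a s _ ih =>
    intro v hv
    have hslice : f.toLinearMap v a = 0 := LinearMap.ext_on (hS a) fun t ht => by
      refine ih (Function.update v a t) fun i hi => ?_
      rcases eq_or_ne i a with rfl | hia
      · simpa using ht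
      · simpa [hia] using hv i (by simp [hia, hi])
    simpa using LinearMap.congr_fun hslice (v a)

section Multilinear

variable {A : Type} [Ring A] [Algebra F A]

lemma lift_monomial {n : ℕ} (σ : Equiv.Perm (Fin n)) (v : ℕ → A) :
    FreeAlgebra.lift F v
        (List.ofFn fun i : Fin n => FreeAlgebra.ι F ((σ i : Fin n) : ℕ)).prod
      = (List.ofFn fun i : Fin n => v (σ i)).prod := by
  simp [map_list_prod, List.map_ofFn, Function.comp_def]

lemma exists_multilinearMap_lift_eq {n : ℕ} {p : FreeAlgebra F ℕ} (hp : p ∈ Pn F n) :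
    ∃ f : MultilinearMap F (fun _ : Fin n => A) A,
      ∀ v : ℕ → A, FreeAlgebra.lift F v p = f fun i => v i := by
  induction hp using Submodule.span_induction with
  | mem x hx =>
    obtain ⟨σ, rfl⟩ := hx
    exact ⟨(MultilinearMap.mkPiAlgebraFin F n A).domDomCongr σ, fun v => by
      simp [lift_monomial, MultilinearMap.domDomCongr_apply]⟩
  | zero => exact ⟨0, by simp⟩
  | add x y _ _ hx hy =>
    obtain ⟨f, hf⟩ := hx
    obtain ⟨g, hg⟩ := hy
    exact ⟨f + g, by simp [hf, hg]⟩
  | smul a x _ hx =>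
    obtain ⟨f, hf⟩ := hx
    exact ⟨a • f, by simp [hf]⟩

end Multilinear

section TensorProduct

variable {W : Type} [Ring W] [Algebra F W] {R : Type} [CommRing R] [Algebra F R]

lemma list_prod_ofFn_tmul : ∀ {n : ℕ} (w : Fin n → W) (r : Fin n → R),
    (List.ofFn fun i => w i ⊗ₜ[F] r i).prod = (List.ofFn w).prod ⊗ₜ[F] ∏ i, r i
  | 0, _, _ => by simp [Algebra.TensorProduct.one_def]
  | _ + 1, w, r => by
    rw [List.ofFn_succ, List.ofFn_succ, List.prod_cons, List.prod_cons,
      list_prod_ofFn_tmul (fun i => w i.succ) (fun i => r i.succ),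
      Algebra.TensorProduct.tmul_mul_tmul, Fin.prod_univ_succ]

lemma lift_tmul_of_mem_Pn {n : ℕ} {p : FreeAlgebra F ℕ} (hp : p ∈ Pn F n)
    (w : ℕ → W) (r : ℕ → R) :
    FreeAlgebra.lift F (fun i => w i ⊗ₜ[F] r i) p
      = FreeAlgebra.lift F w p ⊗ₜ[F] ∏ i : Fin n, r i := by
  induction hp using Submodule.span_induction with
  | mem x hx =>
    obtain ⟨σ, rfl⟩ := hx
    rw [lift_monomial, lift_monomial, list_prod_ofFn_tmul]
    congr 1
    exact Equiv.prod_comp σ fun i : Fin n => r i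
  | zero => simp
  | add x y _ _ hx hy => simp [hx, hy, TensorProduct.add_tmul]
  | smul a x _ hx => simp [hx, TensorProduct.smul_tmul']

lemma mem_IdSet_tensorProduct {n : ℕ} {p : FreeAlgebra F ℕ} (hp : p ∈ Pn F n)
    (hW : p ∈ IdSet F W) : p ∈ IdSet F (W ⊗[F] R) := by
  obtain ⟨f, hf⟩ := exists_multilinearMap_lift_eq F (A := W ⊗[F] R) hp
  have hpure : ∀ (w : Fin n → W) (r : Fin n → R), f (fun i => w i ⊗ₜ[F] r i) = 0 := by
    intro w r
    have hw := hW (FreeAlgebra.lift F (Function.extend Fin.val w 0))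
    have h := hf fun i => Function.extend Fin.val w 0 i ⊗ₜ[F] Function.extend Fin.val r 0 i
    simpa [Fin.val_injective.extend_apply, lift_tmul_of_mem_Pn F hp, hw] using h.symm
  have hzero : f = 0 := f.eq_zero_of_span_eq_top
    (S := fun _ => {t | ∃ (w : W) (r : R), w ⊗ₜ[F] r = t})
    (fun _ => TensorProduct.span_tmul_eq_top F W R) fun v hv => by
      choose w r hwr using hv
      simpa [hwr] using hpure w r
  intro φ
  rw [← FreeAlgebra.lift_comp_ι φ, hf, hzero]
  rfl

lemma mem_IdSet_of_mem_IdSet_tensorProduct [Nontrivial R] {p : FreeAlgebra F ℕ}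
    (h : p ∈ IdSet F (W ⊗[F] R)) : p ∈ IdSet F W := fun φ =>
  Algebra.TensorProduct.includeLeft_injective (S := F) (algebraMap F R).injective
    (by simpa using h (Algebra.TensorProduct.includeLeft.comp φ))

end TensorProduct

theorem statement15_general {F : Type} [Field F]
    (W : Type) [Ring W] [Algebra F W]
    (R : Type) [CommRing R] [IsDomain R] [Algebra F R] :
    ∀ n : ℕ, codim F W n = codim F (W ⊗[F] R) n := by
  intro n
  have h : Submodule.comap (Pn F n).subtype (IdSet F W)
      = Submodule.comap (Pn F n).subtype (IdSet F (W ⊗[F] R)) := by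
    ext p
    exact ⟨mem_IdSet_tensorProduct F p.2, mem_IdSet_of_mem_IdSet_tensorProduct F⟩
  rw [codim, codim, h]

/-- Codimensions are unchanged under extension of scalars by a nonzero
commutative integral domain: `c_n(W) = c_n(W ⊗_F R)` for all `n`. -/
theorem statement15 {F : Type} [Field F] [CharZero F]
    (W : Type) [Ring W] [Algebra F W]
    (R : Type) [CommRing R] [IsDomain R] [Algebra F R] :
    ∀ n : ℕ, codim F W n = codim F (W ⊗[F] R) n :=
  statement15_general W R

end PIDim
end
end
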